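/- On a Kenmotsu pseudo-metric manifold, the curvature tensor satisfies R(X,Y)φZ − φR(X,Y)Z = ε{g(Y,Z)φX − g(X,Z)φY + g(X,φZ)Y − g(Y,φZ)X} for all vector fields X, Y, Z. -/
import Mathlib


open scoped BigOperators

/-- An almost contact structure with a pseudo-Riemannian metric, *without* the
compatibility condition `g(φX,φY) = g(X,Y) - ε η(X) η(Y)`.  Here `C` plays the
role of the ring of smooth functions and `V` the `C`-module of vector fields. -/
structure PreACPM (C V : Type) [CommRing C] [Algebra ℝ C] [AddCommGroup V] [Module C V] where
  g : V → V → C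
  g_symm : ∀ X Y, g X Y = g Y X
  g_add_left : ∀ X Y Z, g (X + Y) Z = g X Z + g Y Z
  g_smul_left : ∀ (f : C) (X Y : V), g (f • X) Y = f * g X Y
  g_nondeg : ∀ X, (∀ Y, g X Y = 0) → X = 0
  φ : V → V
  φ_add : ∀ X Y, φ (X + Y) = φ X + φ Y
  φ_smul : ∀ (f : C) (X : V), φ (f • X) = f • φ X
  ξ : V
  η : V → C
  η_add : ∀ X Y, η (X + Y) = η X + η Y
  η_smul : ∀ (f : C) (X : V), η (f • X) = f * η X
  ε : ℝ
  hε : ε = 1 ∨ ε = -1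
  φ_sq : ∀ X, φ (φ X) = -X + η X • ξ
  η_ξ : η ξ = 1
  φ_ξ : φ ξ = 0
  η_φ : ∀ X, η (φ X) = 0

/-- An almost contact pseudo-metric manifold:
`g(φX,φY) = g(X,Y) - ε η(X) η(Y)`. -/
structure ACPM (C V : Type) [CommRing C] [Algebra ℝ C] [AddCommGroup V] [Module C V]
    extends PreACPM C V where
  compat : ∀ X Y, g (φ X) (φ Y) = g X Y - ε • (η X * η Y)

/-- A Kenmotsu pseudo-metric manifold: an almost contact pseudo-metric manifold
whose Levi-Civita connection `∇` satisfies `(∇_X φ)Y = -η(Y) φX - ε g(X,φY) ξ`.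
`act X f` is the derivative of the function `f` along the vector field `X`,
`bracket` is the Lie bracket and `nabla` the Levi-Civita connection. -/
structure Kenmotsu (C V : Type) [CommRing C] [Algebra ℝ C] [AddCommGroup V] [Module C V]
    extends ACPM C V where
  act : V → C → C
  act_add₁ : ∀ X Y f, act (X + Y) f = act X f + act Y f
  act_smul₁ : ∀ (f : C) (X : V) (h : C), act (f • X) h = f * act X h
  act_add : ∀ X f h, act X (f + h) = act X f + act X h
  act_mul : ∀ X f h, act X (f * h) = act X f * h + f * act X h
  act_const : ∀ (X : V) (s : ℝ), act X (algebraMap ℝ C s) = 0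
  bracket : V → V → V
  bracket_antisymm : ∀ X Y, bracket X Y = -bracket Y X
  bracket_act : ∀ X Y f, act (bracket X Y) f = act X (act Y f) - act Y (act X f)
  nabla : V → V → V
  nabla_add₁ : ∀ X Y Z, nabla (X + Y) Z = nabla X Z + nabla Y Z
  nabla_smul₁ : ∀ (f : C) (X Y : V), nabla (f • X) Y = f • nabla X Y
  nabla_add₂ : ∀ X Y Z, nabla X (Y + Z) = nabla X Y + nabla X Z
  nabla_leibniz : ∀ (X : V) (f : C) (Y : V), nabla X (f • Y) = act X f • Y + f • nabla X Y
  torsion_free : ∀ X Y, nabla X Y - nabla Y X = bracket X Y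
  metric_compat : ∀ X Y Z, act X (g Y Z) = g (nabla X Y) Z + g Y (nabla X Z)
  kenmotsu : ∀ X Y, nabla X (φ Y) - φ (nabla X Y) = -(η Y • φ X) - (ε • g X (φ Y)) • ξ

namespace Kenmotsu

variable {C V : Type} [CommRing C] [Algebra ℝ C] [AddCommGroup V] [Module C V]

/-- The Riemann curvature tensor `R(X,Y)Z = ∇_X ∇_Y Z - ∇_Y ∇_X Z - ∇_[X,Y] Z`. -/
def R (K : Kenmotsu C V) (X Y Z : V) : V :=
  K.nabla X (K.nabla Y Z) - K.nabla Y (K.nabla X Z) - K.nabla (K.bracket X Y) Z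

/-- The covariant derivative `(∇_W R)(X,Y)Z` of the curvature tensor. -/
def covR (K : Kenmotsu C V) (W X Y Z : V) : V :=
  K.nabla W (K.R X Y Z) - K.R (K.nabla W X) Y Z - K.R X (K.nabla W Y) Z - K.R X Y (K.nabla W Z)

/-- `(∇_X η)(Y)`. -/
def covEta (K : Kenmotsu C V) (X Y : V) : C :=
  K.act X (K.η Y) - K.η (K.nabla X Y)

/-- The Lie derivative `(£_W g)(X,Y)`. -/
def lieg (K : Kenmotsu C V) (W X Y : V) : C :=
  K.act W (K.g X Y) - K.g (K.bracket W X) Y - K.g X (K.bracket W Y)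

/-- The Lie derivative `(£_W φ)(X)`. -/
def liephi (K : Kenmotsu C V) (W X : V) : V :=
  K.bracket W (K.φ X) - K.φ (K.bracket W X)

/-- The Lie derivative `(£_W η)(X)`. -/
def lieeta (K : Kenmotsu C V) (W X : V) : C :=
  K.act W (K.η X) - K.η (K.bracket W X)

end Kenmotsu

/-- A `(2n+1)`-dimensional Kenmotsu pseudo-metric manifold together with a
pseudo-orthonormal frame, the Ricci tensor `Ric` (the trace of the curvature
with respect to the frame) and the Ricci operator `Q`. -/
structure KenmotsuRic (C V : Type) [CommRing C] [Algebra ℝ C] [AddCommGroup V] [Module C V]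
    extends Kenmotsu C V where
  n : ℕ
  frame : Fin (2 * n + 1) → V
  sign : Fin (2 * n + 1) → ℝ
  sign_pm : ∀ i, sign i = 1 ∨ sign i = -1
  frame_orth : ∀ i j, g (frame i) (frame j) = if i = j then sign i • (1 : C) else 0
  frame_span : ∀ X : V, X = ∑ i, (sign i • g X (frame i)) • frame i
  Ric : V → V → C
  hRic : ∀ X Y, Ric X Y = ∑ i, sign i • g (toKenmotsu.R (frame i) X Y) (frame i)
  Q : V → V
  hQ : ∀ X Y, g (Q X) Y = Ric X Y

namespace KenmotsuRic

variable {C V : Type} [CommRing C] [Algebra ℝ C] [AddCommGroup V] [Module C V]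
  [Module ℝ V] [IsScalarTower ℝ C V]

/-- The scalar curvature `r`. -/
def r (K : KenmotsuRic C V) : C := ∑ i, K.sign i • K.Ric (K.frame i) (K.frame i)

/-- The Weyl conformal curvature tensor `C(X,Y)Z`. -/
noncomputable def Weyl (K : KenmotsuRic C V) (X Y Z : V) : V :=
  K.toKenmotsu.R X Y Z
    - (2 * (K.n : ℝ) - 1)⁻¹ •
        (K.Ric Y Z • X + K.g Y Z • K.Q X - K.Ric X Z • Y - K.g X Z • K.Q Y)
    + (2 * (K.n : ℝ) * (2 * (K.n : ℝ) - 1))⁻¹ •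
        ((K.r * K.g Y Z) • X - (K.r * K.g X Z) • Y)

/-- `(∇_X Q)(Y)`. -/
def covQ (K : KenmotsuRic C V) (X Y : V) : V :=
  K.nabla X (K.Q Y) - K.Q (K.nabla X Y)

/-- `M` is η-Einstein: `Ric = a g + b η⊗η` for functions `a`, `b`. -/
def etaEinstein (K : KenmotsuRic C V) : Prop :=
  ∃ a b : C, ∀ X Y, K.Ric X Y = a * K.g X Y + b * (K.η X * K.η Y)

end KenmotsuRic

section Aux

namespace Kenmotsu

variable {C V : Type} [CommRing C] [Algebra ℝ C] [AddCommGroup V] [Module C V]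
  (K : Kenmotsu C V)

lemma g_add_right (X Y Z : V) : K.g X (Y + Z) = K.g X Y + K.g X Z := by
  rw [K.g_symm, K.g_add_left, K.g_symm Y X, K.g_symm Z X]

lemma g_smul_right (f : C) (X Y : V) : K.g X (f • Y) = f * K.g X Y := by
  rw [K.g_symm, K.g_smul_left, K.g_symm Y X]

lemma g_zero_right (X : V) : K.g X 0 = 0 := by
  have : K.g X ((0 : C) • (0 : V)) = 0 := by rw [K.g_smul_right]; ring
  simpa using this

lemma g_zero_left (X : V) : K.g 0 X = 0 := by rw [K.g_symm, K.g_zero_right]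

lemma g_neg_right (X Y : V) : K.g X (-Y) = -K.g X Y := by
  have : K.g X ((-1 : C) • Y) = -K.g X Y := by rw [K.g_smul_right]; ring
  simpa using this

lemma g_neg_left (X Y : V) : K.g (-X) Y = -K.g X Y := by
  rw [K.g_symm, K.g_neg_right, K.g_symm]

lemma g_sub_right (X Y Z : V) : K.g X (Y - Z) = K.g X Y - K.g X Z := by
  rw [sub_eq_add_neg, K.g_add_right, K.g_neg_right, sub_eq_add_neg]

lemma g_sub_left (X Y Z : V) : K.g (X - Y) Z = K.g X Z - K.g Y Z := by
  rw [sub_eq_add_neg, K.g_add_left, K.g_neg_left, sub_eq_add_neg]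

lemma φ_zero : K.φ 0 = 0 := by
  have : K.φ ((0 : C) • (0 : V)) = 0 := by rw [K.φ_smul, zero_smul]
  simpa using this

lemma φ_neg (X : V) : K.φ (-X) = -K.φ X := by
  have : K.φ ((-1 : C) • X) = -K.φ X := by rw [K.φ_smul, neg_smul, one_smul]
  simpa using this

lemma φ_sub (X Y : V) : K.φ (X - Y) = K.φ X - K.φ Y := by
  rw [sub_eq_add_neg, K.φ_add, K.φ_neg, sub_eq_add_neg]

lemma η_zero : K.η 0 = 0 := by
  have : K.η ((0 : C) • (0 : V)) = 0 := by rw [K.η_smul, zero_mul]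
  simpa using this

lemma η_neg (X : V) : K.η (-X) = -K.η X := by
  have : K.η ((-1 : C) • X) = -K.η X := by rw [K.η_smul]; ring
  simpa using this

lemma η_sub (X Y : V) : K.η (X - Y) = K.η X - K.η Y := by
  rw [sub_eq_add_neg, K.η_add, K.η_neg, sub_eq_add_neg]

lemma act_zero (X : V) : K.act X 0 = 0 := by
  have h := K.act_add X 0 0
  rw [add_zero] at h
  exact (left_eq_add.mp h)

lemma act_neg (X : V) (f : C) : K.act X (-f) = -K.act X f := by
  have h := K.act_add X f (-f)
  rw [add_neg_cancel, K.act_zero] at h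
  exact eq_neg_of_add_eq_zero_right h.symm

lemma act_sub (X : V) (f h : C) : K.act X (f - h) = K.act X f - K.act X h := by
  rw [sub_eq_add_neg, K.act_add, K.act_neg, sub_eq_add_neg]

lemma act_real_smul (X : V) (s : ℝ) (f : C) : K.act X (s • f) = s • K.act X f := by
  rw [Algebra.smul_def, K.act_mul, K.act_const, zero_mul, zero_add, ← Algebra.smul_def]

lemma act_one (X : V) : K.act X (1 : C) = 0 := by
  rw [← map_one (algebraMap ℝ C), K.act_const]

lemma gxi (X : V) : K.g X K.ξ = K.ε • K.η X := by
  have h := K.compat X K.ξ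
  rw [K.φ_ξ, K.g_zero_right, K.η_ξ, mul_one] at h
  exact sub_eq_zero.mp h.symm

lemma eta_eq (X : V) : K.η X = K.ε • K.g X K.ξ := by
  rw [K.gxi, smul_smul]
  rcases K.hε with h | h <;> simp [h]

lemma nabla_zero₂ (X : V) : K.nabla X 0 = 0 := by
  have h : K.nabla X ((0 : C) • (0 : V)) = 0 := by
    rw [K.nabla_leibniz]; simp
  simpa using h

lemma nabla_neg₂ (X Y : V) : K.nabla X (-Y) = -K.nabla X Y := by
  have h : K.nabla X ((-1 : C) • Y) = -K.nabla X Y := by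
    rw [K.nabla_leibniz]
    have : K.act X (-1 : C) = 0 := by
      rw [show ((-1 : C)) = algebraMap ℝ C (-1) by simp, K.act_const]
    rw [this, zero_smul, zero_add, neg_smul, one_smul]
  simpa using h

lemma nabla_sub₂ (X Y Z : V) : K.nabla X (Y - Z) = K.nabla X Y - K.nabla X Z := by
  rw [sub_eq_add_neg, K.nabla_add₂, K.nabla_neg₂, sub_eq_add_neg]

lemma nabla_neg₁ (X Y : V) : K.nabla (-X) Y = -K.nabla X Y := by
  have h : K.nabla ((-1 : C) • X) Y = -K.nabla X Y := by
    rw [K.nabla_smul₁, neg_smul, one_smul]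
  simpa using h

lemma nabla_sub₁ (X Y Z : V) : K.nabla (X - Y) Z = K.nabla X Z - K.nabla Y Z := by
  rw [sub_eq_add_neg, K.nabla_add₁, K.nabla_neg₁, sub_eq_add_neg]

lemma nabla_phi (X Y : V) :
    K.nabla X (K.φ Y) = K.φ (K.nabla X Y) - K.η Y • K.φ X - (K.ε • K.g X (K.φ Y)) • K.ξ := by
  have h := K.kenmotsu X Y
  have := sub_eq_iff_eq_add.mp h
  rw [this]; abel

lemma g_nabla_xi_xi (X : V) : K.g (K.nabla X K.ξ) K.ξ = 0 := by
  have h := K.metric_compat X K.ξ K.ξ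
  have hg : K.g K.ξ K.ξ = K.ε • (1 : C) := by rw [K.gxi, K.η_ξ]
  have hact : K.act X (K.g K.ξ K.ξ) = 0 := by
    rw [hg, K.act_real_smul, K.act_one, smul_zero]
  rw [hact, K.g_symm K.ξ (K.nabla X K.ξ)] at h
  set c := K.g (K.nabla X K.ξ) K.ξ with hc
  have h2 : c + c = 0 := h.symm
  calc c = (2⁻¹ : ℝ) • (c + c) := by
        rw [smul_add, ← add_smul]; norm_num
    _ = 0 := by rw [h2, smul_zero]

lemma nabla_xi (X : V) : K.nabla X K.ξ = X - K.η X • K.ξ := by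
  have h := K.kenmotsu X K.ξ
  rw [K.φ_ξ, K.g_zero_right, smul_zero, zero_smul, K.nabla_zero₂, K.η_ξ, one_smul,
    zero_sub, sub_zero] at h
  -- h : -(K.φ (K.nabla X K.ξ)) = -(K.φ X)
  have hφ : K.φ (K.nabla X K.ξ) = K.φ X := by
    have := congrArg Neg.neg h; simpa using this
  have hφφ := congrArg K.φ hφ
  rw [K.φ_sq, K.φ_sq] at hφφ
  have hη : K.η (K.nabla X K.ξ) = 0 := by
    rw [K.eta_eq, K.g_nabla_xi_xi, smul_zero]
  rw [hη, zero_smul, add_zero] at hφφ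
  have := congrArg Neg.neg hφφ
  simp only [neg_neg, neg_add] at this
  rw [this]; abel

lemma act_eta (X Z : V) :
    K.act X (K.η Z) = K.η (K.nabla X Z) + K.ε • K.g Z X - K.η X * K.η Z := by
  rw [K.eta_eq Z, K.act_real_smul, K.metric_compat, K.nabla_xi, K.g_sub_right,
    K.g_smul_right, K.gxi, K.gxi]
  rcases K.hε with h | h <;> simp [h, smul_add, smul_sub] <;> ring

end Kenmotsu

end Aux

/-- On a Kenmotsu pseudo-metric manifold,
`R(X,Y)φZ - φR(X,Y)Z = ε{g(Y,Z)φX - g(X,Z)φY + g(X,φZ)Y - g(Y,φZ)X}`. -/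
theorem curvature_phi_commutator {C V : Type} [CommRing C] [Algebra ℝ C] [AddCommGroup V]
    [Module C V] (K : Kenmotsu C V) :
    ∀ X Y Z, K.R X Y (K.φ Z) - K.φ (K.R X Y Z) =
      (K.ε • K.g Y Z) • K.φ X - (K.ε • K.g X Z) • K.φ Y +
        (K.ε • K.g X (K.φ Z)) • Y - (K.ε • K.g Y (K.φ Z)) • X := by
  intro X Y Z
  rw [show K.g Y Z = K.g Z Y from K.g_symm Y Z, show K.g X Z = K.g Z X from K.g_symm X Z]
  rcases K.hε with h | h <;>
  · simp only [Kenmotsu.R, ← K.torsion_free, K.nabla_phi, K.nabla_xi, K.nabla_sub₂,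
      K.nabla_sub₁, K.nabla_add₂, K.nabla_leibniz, K.act_eta, K.act_neg, K.act_sub,
      K.act_zero, K.metric_compat, K.g_sub_right, K.g_sub_left, K.g_add_right, K.g_add_left,
      K.g_smul_right, K.g_smul_left, K.gxi, K.g_zero_right, K.g_neg_right, K.g_neg_left, K.φ_sub, K.φ_add, K.φ_neg,
      K.φ_smul, K.η_sub, K.η_add, K.η_neg, K.η_smul, K.η_φ, K.η_ξ, K.φ_ξ, K.φ_zero,
      K.nabla_neg₂, K.nabla_neg₁, h, one_smul, neg_one_smul, neg_neg, smul_neg, neg_smul,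
      smul_zero, zero_smul, mul_one, one_mul, mul_zero, zero_mul, sub_zero, zero_sub,
      smul_add, smul_sub, add_smul, sub_smul]
    module
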